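/- arXiv:2402.18872 — 6 statements merged into one kernel-verified Lean document; each statement's English description precedes it below -/
import Mathlib

section
/- If φ: Ω × ℝ → ℝ is such that x ↦ φ(ω,x) is convex and finite for every ω, and ω ↦ φ(ω,x) is upper semicontinuous for every x, then for every bounded continuous f: Ω → ℝ, the map ω ↦ φ(ω, f(ω)) is upper semicontinuous. -/
open Set

theorem stmt_0 {Ω : Type*} [TopologicalSpace Ω] [TopologicalSpace.MetrizableSpace Ω]
    (φ : Ω → ℝ → ℝ)
    (hconv : ∀ ω, ConvexOn ℝ Set.univ (φ ω))
    (husc : ∀ x : ℝ, UpperSemicontinuous (fun ω => φ ω x))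
    (f : BoundedContinuousFunction Ω ℝ) :
    UpperSemicontinuous (fun ω => φ ω (f ω)) := by
  intro ω₀ y hy
  set x₀ : ℝ := f ω₀ with hx₀
  set c : ℝ := φ ω₀ x₀ with hc
  set a : ℝ := φ ω₀ (x₀ - 1) with ha
  set b : ℝ := φ ω₀ (x₀ + 1) with hb
  have hyc : (0:ℝ) < y - c := by simpa using sub_pos.mpr hy
  set D : ℝ := 1 + |a - c| + |b - c| with hD
  have hD0 : (0:ℝ) < D := by positivity
  set t : ℝ := min 1 ((y - c) / (2 * D)) with ht
  have ht0 : 0 < t := lt_min one_pos (by positivity)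
  have ht1 : t ≤ 1 := min_le_left _ _
  have htD : t * D < y - c := by
    calc t * D ≤ ((y - c) / (2 * D)) * D := by
          exact mul_le_mul_of_nonneg_right (min_le_right _ _) hD0.le
    _ = (y - c) / 2 := by field_simp
    _ < y - c := by linarith
  -- bound φ ω₀ at x₀ + t and x₀ - t
  have key : ∀ s : ℝ, φ ω₀ ((1 - t) * x₀ + t * s) ≤ (1 - t) * c + t * φ ω₀ s := by
    intro s
    exact (hconv ω₀).2 (mem_univ _) (mem_univ _) (by linarith) ht0.le (by ring)
  have hplus : φ ω₀ (x₀ + t) < y := by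
    have h1 := key (x₀ + 1)
    have h2 : (1 - t) * x₀ + t * (x₀ + 1) = x₀ + t := by ring
    rw [h2] at h1
    have hb' : |b - c| ≤ D := by
      rw [hD]; have := abs_nonneg (a - c); linarith
    have : t * (b - c) ≤ t * D := by
      exact le_trans (mul_le_mul_of_nonneg_left (le_abs_self _) ht0.le)
        (mul_le_mul_of_nonneg_left hb' ht0.le)
    calc φ ω₀ (x₀ + t) ≤ (1 - t) * c + t * b := h1
      _ = c + t * (b - c) := by ring
      _ ≤ c + t * D := by linarith
      _ < y := by linarith
  have hminus : φ ω₀ (x₀ - t) < y := by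
    have h1 := key (x₀ - 1)
    have h2 : (1 - t) * x₀ + t * (x₀ - 1) = x₀ - t := by ring
    rw [h2] at h1
    have ha' : |a - c| ≤ D := by
      rw [hD]; have := abs_nonneg (b - c); linarith
    have : t * (a - c) ≤ t * D := by
      exact le_trans (mul_le_mul_of_nonneg_left (le_abs_self _) ht0.le)
        (mul_le_mul_of_nonneg_left ha' ht0.le)
    calc φ ω₀ (x₀ - t) ≤ (1 - t) * c + t * a := h1
      _ = c + t * (a - c) := by ring
      _ ≤ c + t * D := by linarith
      _ < y := by linarith
  -- eventually facts
  have e1 : ∀ᶠ ω in nhds ω₀, φ ω (x₀ + t) < y := husc (x₀ + t) ω₀ y hplus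
  have e2 : ∀ᶠ ω in nhds ω₀, φ ω (x₀ - t) < y := husc (x₀ - t) ω₀ y hminus
  have e3 : ∀ᶠ ω in nhds ω₀, f ω ∈ Icc (x₀ - t) (x₀ + t) := by
    have hcont : ContinuousAt f ω₀ := f.continuous.continuousAt
    have : Icc (x₀ - t) (x₀ + t) ∈ nhds (f ω₀) := by
      apply Icc_mem_nhds <;> [linarith; linarith]
    exact hcont this
  filter_upwards [e1, e2, e3] with ω h1 h2 h3
  have hseg : f ω ∈ segment ℝ (x₀ - t) (x₀ + t) := by
    rw [segment_eq_Icc (by linarith : x₀ - t ≤ x₀ + t)]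
    exact h3
  have := (hconv ω).le_on_segment (mem_univ _) (mem_univ _) hseg
  calc φ ω (f ω) ≤ max (φ ω (x₀ - t)) (φ ω (x₀ + t)) := this
    _ < y := max_lt h2 h1
end

section
/- Let 𝒫 be a nonempty set of Borel probability measures on a Polish space Ω and φ: Ω × ℝ → ℝ a jointly measurable function with φ(ω,·) convex, ω ↦ φ(ω,x) upper semicontinuous for each x, sup_{P∈𝒫} E_P[φ(·,x)⁺] < ∞ for each x, and such that there exists a measurable η with sup_{P∈𝒫} E_P[|η|] < ∞ and sup_{P∈𝒫} E_P[φ*(·,η)⁺] < ∞. Then the functional I(f) := sup_{P∈𝒫} ∫ φ(ω, f(ω)) dP(ω) is finite for every f ∈ C_b(Ω), convex in f, and lower semicontinuous along uniformly bounded pointwise convergent sequences: if sup_n ‖f_n‖_∞ < ∞ and f_n → f pointwise, then I(f) ≤ liminf_n I(f_n). -/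
/-!
Young's inequality gives `φ(ω, x) ≥ x η(ω) - φ*(ω, η ω)⁺`, and convexity gives
`φ(ω, x) ≤ φ(ω, M)⁺ + φ(ω, -M)⁺` for `|x| ≤ M`. So on functions bounded by `M` the integrand is
dominated by a function integrable under every `P ∈ 𝒫`, while its integral is bounded above
uniformly in `P`. Each `f ↦ ∫ φ(ω, f ω) dP` is then finite, convex, and (by dominated convergence,
`φ(ω, ·)` being continuous) continuous along bounded pointwise convergent sequences; a supremum of
such a family that is bounded above is convex and sequentially lower semicontinuous.
-/

open MeasureTheory Filter Topology Set

theorem lt_of_iSup_lt {ι α : Type*} [CompleteLattice α] {f : ι → α} {a : α} (h : iSup f < a)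
    (i : ι) : f i < a :=
  (le_iSup f i).trans_lt h

theorem ConvexOn.ciSup {ι 𝕜 E : Type*} [Nonempty ι] [Semiring 𝕜] [PartialOrder 𝕜]
    [AddCommMonoid E] [SMul 𝕜 E] [Module 𝕜 ℝ] [PosSMulMono 𝕜 ℝ]
    {s : Set E} {f : ι → E → ℝ} (hf : ∀ i, ConvexOn 𝕜 s (f i))
    (hbdd : ∀ x ∈ s, BddAbove (range fun i => f i x)) :
    ConvexOn 𝕜 s fun x => ⨆ i, f i x :=
  ⟨(hf (Classical.arbitrary ι)).1, fun x hx y hy _ _ ha hb hab => ciSup_le fun i =>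
    ((hf i).2 hx hy ha hb hab).trans <| add_le_add
      (smul_le_smul_of_nonneg_left (le_ciSup (hbdd x hx) i) ha)
      (smul_le_smul_of_nonneg_left (le_ciSup (hbdd y hy) i) hb)⟩

theorem ciSup_le_liminf_ciSup_of_tendsto {ι α : Type*} [Nonempty ι] {l : Filter α} [l.NeBot]
    {F : ι → α → ℝ} {a : ι → ℝ} (hF : ∀ i, Tendsto (F i) l (𝓝 (a i))) {B : ℝ}
    (hB : ∀ i x, F i x ≤ B) :
    ⨆ i, a i ≤ liminf (fun x => ⨆ i, F i x) l := ciSup_le fun i => by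
  rw [← (hF i).liminf_eq]
  have hsup_le : ∀ x, ⨆ j, F j x ≤ B := fun x => ciSup_le (hB · x)
  refine liminf_le_liminf ?_ (hF i).isBoundedUnder_ge
    (IsBoundedUnder.isCoboundedUnder_ge ⟨B, eventually_map.2 (.of_forall hsup_le)⟩)
  exact .of_forall fun x => le_ciSup ⟨B, forall_mem_range.2 (hB · x)⟩ i

theorem ConvexOn.continuous_of_univ {f : ℝ → ℝ} (hf : ConvexOn ℝ univ f) : Continuous f :=
  continuousOn_univ.1 (hf.continuousOn isOpen_univ)

theorem ConvexOn.le_posPart_add_posPart {f : ℝ → ℝ} (hf : ConvexOn ℝ univ f) {M x : ℝ}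
    (hx : |x| ≤ M) : f x ≤ max (f M) 0 + max (f (-M)) 0 := by
  have := hf.le_max_of_mem_Icc (mem_univ _) (mem_univ _) (abs_le.1 hx)
  grind

theorem integral_le_toReal_iSup_lintegral {ι Ω : Type*} [MeasurableSpace Ω] (μ : ι → Measure Ω)
    {g : Ω → ℝ} (hg : 0 ≤ g) (hfin : ⨆ i, ∫⁻ ω, ENNReal.ofReal (g ω) ∂μ i ≠ ⊤) (i : ι) :
    ∫ ω, g ω ∂μ i ≤ (⨆ i, ∫⁻ ω, ENNReal.ofReal (g ω) ∂μ i).toReal := calc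
  ∫ ω, g ω ∂μ i ≤ (∫⁻ ω, ENNReal.ofReal ‖g ω‖ ∂μ i).toReal :=
    (le_abs_self _).trans (norm_integral_le_lintegral_norm g)
  _ ≤ _ := by
    simp only [Real.norm_of_nonneg (hg _)]
    exact ENNReal.toReal_mono hfin (le_iSup (fun i => ∫⁻ ω, ENNReal.ofReal (g ω) ∂μ i) i)

theorem iSup_ofReal_eq_iSup_rat {g : ℝ → ℝ} (hg : Continuous g) :
    ⨆ x, ENNReal.ofReal (g x) = ⨆ q : ℚ, ENNReal.ofReal (g q) := by
  rw [← Rat.denseRange_cast.ciSup' (f := fun x => ENNReal.ofReal (g x))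
    (ENNReal.continuous_ofReal.comp hg), iSup_range' (fun x => ENNReal.ofReal (g x))]

section YoungBound

variable {Ω : Type*}

/-- `φ*(ω, η ω)⁺`, with the value `⊤` where the conjugate is infinite. -/
noncomputable def conjPosPart (φ : Ω → ℝ → ℝ) (η : Ω → ℝ) (ω : Ω) : ENNReal :=
  ⨆ x : ℝ, ENNReal.ofReal (x * η ω - φ ω x)

noncomputable def youngEnvelope (φ : Ω → ℝ → ℝ) (η : Ω → ℝ) (M : ℝ) (ω : Ω) : ℝ :=
  max (φ ω M) 0 + max (φ ω (-M)) 0 + (M * |η ω| + (conjPosPart φ η ω).toReal)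

theorem mul_sub_conjPosPart_le {φ : Ω → ℝ → ℝ} {η : Ω → ℝ} {ω : Ω}
    (hω : conjPosPart φ η ω ≠ ⊤) (x : ℝ) : x * η ω - (conjPosPart φ η ω).toReal ≤ φ ω x := by
  have hx : ENNReal.ofReal (x * η ω - φ ω x) ≤ conjPosPart φ η ω :=
    le_iSup (fun x : ℝ => ENNReal.ofReal (x * η ω - φ ω x)) x
  linarith [ENNReal.ofReal_le_iff_le_toReal hω |>.1 hx,
    ENNReal.toReal_nonneg (a := conjPosPart φ η ω)]

theorem abs_le_youngEnvelope {φ : Ω → ℝ → ℝ} {η : Ω → ℝ} {ω : Ω} {M x : ℝ}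
    (hconv : ConvexOn ℝ univ (φ ω)) (hω : conjPosPart φ η ω ≠ ⊤) (hx : |x| ≤ M) :
    |φ ω x| ≤ youngEnvelope φ η M ω := by
  have hupper := hconv.le_posPart_add_posPart hx
  have hlower := mul_sub_conjPosPart_le hω x
  have hprod : |x * η ω| ≤ M * |η ω| := by
    rw [abs_mul]; exact mul_le_mul_of_nonneg_right hx (abs_nonneg _)
  unfold youngEnvelope
  rw [abs_le]
  constructor
  · linarith [neg_abs_le (x * η ω), le_max_right (φ ω M) 0, le_max_right (φ ω (-M)) 0]
  · linarith [abs_nonneg (x * η ω), ENNReal.toReal_nonneg (a := conjPosPart φ η ω)]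

end YoungBound

section Integrand

variable {Ω : Type*} [MeasurableSpace Ω]

theorem measurable_conjPosPart {φ : Ω → ℝ → ℝ} {η : Ω → ℝ}
    (hφ : Measurable (Function.uncurry φ)) (hcont : ∀ ω, Continuous (φ ω)) (hη : Measurable η) :
    Measurable (conjPosPart φ η) := by
  have hrat : conjPosPart φ η = fun ω => ⨆ q : ℚ, ENNReal.ofReal (q * η ω - φ ω q) :=
    funext fun ω => iSup_ofReal_eq_iSup_rat ((continuous_id.mul continuous_const).sub (hcont ω))
  rw [hrat]
  exact Measurable.iSup fun q =>
    ((hη.const_mul _).sub (hφ.comp (measurable_id.prodMk measurable_const))).ennreal_ofReal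

structure HasIntegrableYoungBound (φ : Ω → ℝ → ℝ) (η : Ω → ℝ) (P : Measure Ω) : Prop where
  measurable : Measurable (Function.uncurry φ)
  convexOn : ∀ ω, ConvexOn ℝ univ (φ ω)
  measurable_dual : Measurable η
  lintegral_posPart_lt_top : ∀ x, ∫⁻ ω, ENNReal.ofReal (max (φ ω x) 0) ∂P < ⊤
  lintegral_abs_dual_lt_top : ∫⁻ ω, ENNReal.ofReal |η ω| ∂P < ⊤
  lintegral_conjPosPart_lt_top : ∫⁻ ω, conjPosPart φ η ω ∂P < ⊤

namespace HasIntegrableYoungBound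

variable {φ : Ω → ℝ → ℝ} {η : Ω → ℝ} {P : Measure Ω} (h : HasIntegrableYoungBound φ η P)
include h

theorem measurable_comp {u : Ω → ℝ} (hu : Measurable u) : Measurable fun ω => φ ω (u ω) :=
  h.measurable.comp (measurable_id.prodMk hu)

theorem integrable_posPart (x : ℝ) : Integrable (fun ω => max (φ ω x) 0) P :=
  ⟨(h.measurable_comp measurable_const).max measurable_const |>.aestronglyMeasurable,
    (hasFiniteIntegral_iff_ofReal (Eventually.of_forall fun _ => le_max_right _ _)).2
      (h.lintegral_posPart_lt_top x)⟩

theorem measurable_conjPosPart : Measurable (conjPosPart φ η) :=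
  _root_.measurable_conjPosPart h.measurable (fun ω => (h.convexOn ω).continuous_of_univ)
    h.measurable_dual

theorem integrable_youngEnvelope (M : ℝ) : Integrable (youngEnvelope φ η M) P := by
  have habs : Integrable (fun ω => |η ω|) P :=
    ⟨h.measurable_dual.abs.aestronglyMeasurable,
      (hasFiniteIntegral_iff_ofReal (Eventually.of_forall fun _ => abs_nonneg _)).2
        h.lintegral_abs_dual_lt_top⟩
  have hconj : Integrable (fun ω => (conjPosPart φ η ω).toReal) P :=
    integrable_toReal_of_lintegral_ne_top h.measurable_conjPosPart.aemeasurable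
      h.lintegral_conjPosPart_lt_top.ne
  exact ((h.integrable_posPart M).add (h.integrable_posPart (-M))).add
    ((habs.const_mul M).add hconj)

theorem ae_abs_comp_le_youngEnvelope {u : Ω → ℝ} {M : ℝ} (hM : ∀ ω, |u ω| ≤ M) :
    ∀ᵐ ω ∂P, |φ ω (u ω)| ≤ youngEnvelope φ η M ω := by
  filter_upwards [ae_lt_top h.measurable_conjPosPart h.lintegral_conjPosPart_lt_top.ne] with ω hω
  exact abs_le_youngEnvelope (h.convexOn ω) hω.ne (hM ω)

theorem integrable_comp {u : Ω → ℝ} {M : ℝ} (hu : Measurable u) (hM : ∀ ω, |u ω| ≤ M) :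
    Integrable (fun ω => φ ω (u ω)) P :=
  (h.integrable_youngEnvelope M).mono' (h.measurable_comp hu).aestronglyMeasurable
    (h.ae_abs_comp_le_youngEnvelope hM)

theorem integral_comp_le {u : Ω → ℝ} {M : ℝ} (hu : Measurable u) (hM : ∀ ω, |u ω| ≤ M) :
    ∫ ω, φ ω (u ω) ∂P ≤ ∫ ω, max (φ ω M) 0 ∂P + ∫ ω, max (φ ω (-M)) 0 ∂P := by
  rw [← integral_add (h.integrable_posPart M) (h.integrable_posPart (-M))]
  exact integral_mono (h.integrable_comp hu hM)
    ((h.integrable_posPart M).add (h.integrable_posPart (-M)))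
    fun ω => (h.convexOn ω).le_posPart_add_posPart (hM ω)

theorem tendsto_integral_comp {ι : Type*} {l : Filter ι} [l.IsCountablyGenerated]
    {u : ι → Ω → ℝ} {v : Ω → ℝ} {M : ℝ} (hu : ∀ i, Measurable (u i)) (hM : ∀ i ω, |u i ω| ≤ M)
    (hlim : ∀ ω, Tendsto (fun i => u i ω) l (𝓝 (v ω))) :
    Tendsto (fun i => ∫ ω, φ ω (u i ω) ∂P) l (𝓝 (∫ ω, φ ω (v ω) ∂P)) :=
  tendsto_integral_filter_of_dominated_convergence (youngEnvelope φ η M)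
    (Eventually.of_forall fun i => (h.measurable_comp (hu i)).aestronglyMeasurable)
    (Eventually.of_forall fun i => h.ae_abs_comp_le_youngEnvelope (hM i))
    (h.integrable_youngEnvelope M)
    (Eventually.of_forall fun ω => ((h.convexOn ω).continuous_of_univ.tendsto _).comp (hlim ω))

theorem convexOn_integral_comp [TopologicalSpace Ω] [OpensMeasurableSpace Ω] :
    ConvexOn ℝ univ fun f : BoundedContinuousFunction Ω ℝ => ∫ ω, φ ω (f ω) ∂P := by
  have hint (f : BoundedContinuousFunction Ω ℝ) : Integrable (fun ω => φ ω (f ω)) P :=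
    h.integrable_comp f.continuous.measurable f.norm_coe_le_norm
  refine ⟨convex_univ, fun f _ g _ a b ha hb hab => ?_⟩
  calc ∫ ω, φ ω ((a • f + b • g) ω) ∂P
      ≤ ∫ ω, (a * φ ω (f ω) + b * φ ω (g ω)) ∂P :=
        integral_mono (hint _) (((hint f).const_mul a).add ((hint g).const_mul b)) fun ω =>
          (h.convexOn ω).2 (mem_univ (f ω)) (mem_univ (g ω)) ha hb hab
    _ = a • ∫ ω, φ ω (f ω) ∂P + b • ∫ ω, φ ω (g ω) ∂P := by
      rw [integral_add ((hint f).const_mul a) ((hint g).const_mul b), integral_const_mul,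
        integral_const_mul, smul_eq_mul, smul_eq_mul]

end HasIntegrableYoungBound

end Integrand

theorem stmt_4_general {Ω : Type*} [TopologicalSpace Ω]
    [MeasurableSpace Ω] [BorelSpace Ω]
    (Ps : Set (Measure Ω)) (hPsne : Ps.Nonempty)
    (φ : Ω → ℝ → ℝ)
    (hφmeas : Measurable (Function.uncurry φ))
    (hconv : ∀ ω, ConvexOn ℝ Set.univ (φ ω))
    (hplus : ∀ x : ℝ,
      (⨆ P : Ps, ∫⁻ ω, ENNReal.ofReal (max (φ ω x) 0) ∂(P : Measure Ω)) < ⊤)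
    (η : Ω → ℝ) (hη : Measurable η)
    (hη1 : (⨆ P : Ps, ∫⁻ ω, ENNReal.ofReal |η ω| ∂(P : Measure Ω)) < ⊤)
    (hηstar : (⨆ P : Ps,
      ∫⁻ ω, ⨆ x : ℝ, ENNReal.ofReal (x * η ω - φ ω x) ∂(P : Measure Ω)) < ⊤)
    (I : BoundedContinuousFunction Ω ℝ → ℝ)
    (hI : ∀ f, I f = ⨆ P : Ps, ∫ ω, φ ω (f ω) ∂(P : Measure Ω)) :
    (∀ f : BoundedContinuousFunction Ω ℝ,
        BddAbove (Set.range fun P : Ps => ∫ ω, φ ω (f ω) ∂(P : Measure Ω))) ∧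
    ConvexOn ℝ Set.univ I ∧
    (∀ (fn : ℕ → BoundedContinuousFunction Ω ℝ) (f : BoundedContinuousFunction Ω ℝ),
      (∃ C : ℝ, ∀ n, ‖fn n‖ ≤ C) →
      (∀ ω, Tendsto (fun n => fn n ω) atTop (𝓝 (f ω))) →
      I f ≤ liminf (fun n => I (fn n)) atTop) := by
  have : Nonempty Ps := hPsne.to_subtype
  have hY (P : Ps) : HasIntegrableYoungBound φ η P :=
    ⟨hφmeas, hconv, hη, fun x => lt_of_iSup_lt (hplus x) P, lt_of_iSup_lt hη1 P,
      lt_of_iSup_lt hηstar P⟩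
  have hbound (M : ℝ) (f : BoundedContinuousFunction Ω ℝ) (hf : ‖f‖ ≤ M) (P : Ps) :
      ∫ ω, φ ω (f ω) ∂(P : Measure Ω) ≤
        (⨆ Q : Ps, ∫⁻ ω, ENNReal.ofReal (max (φ ω M) 0) ∂(Q : Measure Ω)).toReal +
        (⨆ Q : Ps, ∫⁻ ω, ENNReal.ofReal (max (φ ω (-M)) 0) ∂(Q : Measure Ω)).toReal :=
    ((hY P).integral_comp_le f.continuous.measurable fun ω => (f.norm_coe_le_norm ω).trans hf).trans
      (add_le_add
        (integral_le_toReal_iSup_lintegral _ (fun _ => le_max_right _ _) (hplus M).ne P)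
        (integral_le_toReal_iSup_lintegral _ (fun _ => le_max_right _ _) (hplus (-M)).ne P))
  have hbdd (f : BoundedContinuousFunction Ω ℝ) :
      BddAbove (Set.range fun P : Ps => ∫ ω, φ ω (f ω) ∂(P : Measure Ω)) :=
    ⟨_, forall_mem_range.2 (hbound _ f le_rfl)⟩
  refine ⟨hbdd, funext hI ▸ ConvexOn.ciSup (fun P => (hY P).convexOn_integral_comp)
    (fun f _ => hbdd f), fun fn f ⟨C, hC⟩ hlim => ?_⟩
  simp only [hI]
  exact ciSup_le_liminf_ciSup_of_tendsto
    (fun P => (hY P).tendsto_integral_comp (fun n => (fn n).continuous.measurable)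
      (fun n ω => ((fn n).norm_coe_le_norm ω).trans (hC n)) hlim)
    (fun P n => hbound C (fn n) (hC n) P)

theorem stmt_4 {Ω : Type*} [TopologicalSpace Ω] [PolishSpace Ω]
    [MeasurableSpace Ω] [BorelSpace Ω]
    (Ps : Set (Measure Ω)) (hPsne : Ps.Nonempty)
    (hPsprob : ∀ P ∈ Ps, IsProbabilityMeasure P)
    (φ : Ω → ℝ → ℝ)
    (hφmeas : Measurable (Function.uncurry φ))
    (hconv : ∀ ω, ConvexOn ℝ Set.univ (φ ω))
    (husc : ∀ x : ℝ, UpperSemicontinuous (fun ω => φ ω x))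
    (hplus : ∀ x : ℝ,
      (⨆ P : Ps, ∫⁻ ω, ENNReal.ofReal (max (φ ω x) 0) ∂(P : Measure Ω)) < ⊤)
    (η : Ω → ℝ) (hη : Measurable η)
    (hη1 : (⨆ P : Ps, ∫⁻ ω, ENNReal.ofReal |η ω| ∂(P : Measure Ω)) < ⊤)
    (hηstar : (⨆ P : Ps,
      ∫⁻ ω, ⨆ x : ℝ, ENNReal.ofReal (x * η ω - φ ω x) ∂(P : Measure Ω)) < ⊤)
    (I : BoundedContinuousFunction Ω ℝ → ℝ)
    (hI : ∀ f, I f = ⨆ P : Ps, ∫ ω, φ ω (f ω) ∂(P : Measure Ω)) :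
    (∀ f : BoundedContinuousFunction Ω ℝ,
        BddAbove (Set.range fun P : Ps => ∫ ω, φ ω (f ω) ∂(P : Measure Ω))) ∧
    ConvexOn ℝ Set.univ I ∧
    (∀ (fn : ℕ → BoundedContinuousFunction Ω ℝ) (f : BoundedContinuousFunction Ω ℝ),
      (∃ C : ℝ, ∀ n, ‖fn n‖ ≤ C) →
      (∀ ω, Tendsto (fun n => fn n ω) atTop (𝓝 (f ω))) →
      I f ≤ liminf (fun n => I (fn n)) atTop) :=
  stmt_4_general Ps hPsne φ hφmeas hconv hplus η hη hη1 hηstar I hI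
end

section
/- Let φ: Ω × ℝ → ℝ be a jointly measurable normal convex integrand with φ(ω,·) convex and finite, and suppose sup_{P∈𝒫} E_P[φ(·,x)⁺] < ∞ for all x and sup_{P∈𝒫} E_P[φ(·,0)⁻] < ∞. Then there exists a Borel measurable function f: Ω → ℝ such that φ*(ω, f(ω)) ≤ 1 − φ(ω, 0) for all ω; consequently sup_{P∈𝒫} E_P[φ*(·,f)⁺] < ∞ and sup_{P∈𝒫} E_P[|f|] < ∞. -/
/-!
The right derivative `f ω` of `φ ω` at `0` is a subgradient there: `x * f ω - φ ω x ≤ -φ ω 0` for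
every `x`, so `φ*(ω, f ω) ≤ -φ(ω, 0)`, and testing at `x = ±1` bounds `|f|` by
`φ(·, 1)⁺ + φ(·, -1)⁺ + φ(·, 0)⁻`. As a pointwise limit of difference quotients of the measurable
sections `φ(·, y)`, `f` is measurable, so no measurable selection theorem is needed.
-/

open MeasureTheory Filter Topology Set

lemma ConvexOn.mul_rightDeriv_le_sub {f : ℝ → ℝ} (hf : ConvexOn ℝ univ f) (x y : ℝ) :
    (y - x) * derivWithin f (Ioi x) x ≤ f y - f x := by
  have hx : x ∈ interior univ := by simp
  rcases lt_trichotomy y x with hyx | rfl | hxy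
  · have h := (hf.slope_le_leftDeriv_of_mem_interior (mem_univ y) hx hyx).trans
      (hf.leftDeriv_le_rightDeriv_of_mem_interior hx)
    rw [slope_def_field, div_le_iff₀ (sub_pos.2 hyx)] at h
    linarith
  · simp
  · have h := hf.rightDeriv_le_slope_of_mem_interior hx (mem_univ y) hxy
    rw [slope_def_field, le_div_iff₀ (sub_pos.2 hxy)] at h
    linarith

lemma ConvexOn.abs_rightDeriv_zero_le {f : ℝ → ℝ} (hf : ConvexOn ℝ univ f) :
    |derivWithin f (Ioi 0) 0| ≤ max (f 1) 0 + max (f (-1)) 0 + max (-f 0) 0 := by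
  have h₁ := hf.mul_rightDeriv_le_sub 0 1
  have h₂ := hf.mul_rightDeriv_le_sub 0 (-1)
  rw [abs_le]
  constructor <;> linarith [le_max_left (f 1) 0, le_max_right (f 1) 0, le_max_left (f (-1)) 0,
    le_max_right (f (-1)) 0, le_max_left (-f 0) 0, le_max_right (-f 0) 0]

lemma measurable_rightDeriv {Ω : Type*} [MeasurableSpace Ω] {φ : Ω → ℝ → ℝ} {x : ℝ}
    (hmeas : ∀ y, Measurable fun ω => φ ω y)
    (hdiff : ∀ ω, DifferentiableWithinAt ℝ (φ ω) (Ioi x) x) :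
    Measurable fun ω => derivWithin (φ ω) (Ioi x) x := by
  have hseq : Tendsto (fun n : ℕ => x + 1 / (n + 1)) atTop (𝓝[>] x) := by
    refine tendsto_nhdsWithin_of_tendsto_nhds_of_eventually_within _ ?_
      (Eventually.of_forall fun n => ?_)
    · simpa using tendsto_const_nhds.add (tendsto_one_div_add_atTop_nhds_zero_nat (𝕜 := ℝ))
    · simp only [mem_Ioi, lt_add_iff_pos_right]
      positivity
  refine measurable_of_tendsto_metrizable (f := fun n ω => slope (φ ω) x (x + 1 / (n + 1)))
    (fun n => ?_) (tendsto_pi_nhds.2 fun ω => ?_)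
  · simp only [slope_def_field]
    exact ((hmeas _).sub (hmeas x)).div_const _
  · exact ((hasDerivWithinAt_iff_tendsto_slope' self_notMem_Ioi).1
      (hdiff ω).hasDerivWithinAt).comp hseq

lemma iSup_lintegral_add_le {α ι : Type*} [MeasurableSpace α] (μ : ι → Measure α)
    {f g : α → ENNReal} (hf : Measurable f) :
    ⨆ i, ∫⁻ a, f a + g a ∂μ i ≤ (⨆ i, ∫⁻ a, f a ∂μ i) + ⨆ i, ∫⁻ a, g a ∂μ i :=
  iSup_le fun i => (lintegral_add_left hf g).le.trans
    (add_le_add (le_iSup (fun i => ∫⁻ a, f a ∂μ i) i) (le_iSup (fun i => ∫⁻ a, g a ∂μ i) i))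

theorem stmt_7_general {Ω : Type*}
    [MeasurableSpace Ω]
    (Ps : Set (Measure Ω))
    (φ : Ω → ℝ → ℝ)
    (hφmeas : Measurable (Function.uncurry φ))
    (hconv : ∀ ω, ConvexOn ℝ Set.univ (φ ω))
    (hplus : ∀ x : ℝ,
      (⨆ P : Ps, ∫⁻ ω, ENNReal.ofReal (max (φ ω x) 0) ∂(P : Measure Ω)) < ⊤)
    (hminus :
      (⨆ P : Ps, ∫⁻ ω, ENNReal.ofReal (max (-(φ ω 0)) 0) ∂(P : Measure Ω)) < ⊤) :
    ∃ f : Ω → ℝ, Measurable f ∧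
      (∀ ω, (⨆ x : ℝ, ((x * f ω - φ ω x : ℝ) : EReal)) ≤ ((1 - φ ω 0 : ℝ) : EReal)) ∧
      (⨆ P : Ps, ∫⁻ ω, ⨆ x : ℝ,
          ENNReal.ofReal (x * f ω - φ ω x) ∂(P : Measure Ω)) < ⊤ ∧
      (⨆ P : Ps, ∫⁻ ω, ENNReal.ofReal |f ω| ∂(P : Measure Ω)) < ⊤ := by
  set f : Ω → ℝ := fun ω => derivWithin (φ ω) (Ioi 0) 0
  have hsec : ∀ x, Measurable fun ω => φ ω x := fun x =>
    hφmeas.comp (measurable_id.prodMk measurable_const)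
  have hsub : ∀ ω x, x * f ω - φ ω x ≤ -φ ω 0 := fun ω x => by
    linarith [(hconv ω).mul_rightDeriv_le_sub 0 x]
  have habs : ∀ ω, ENNReal.ofReal |f ω| ≤ ENNReal.ofReal (max (φ ω 1) 0)
      + ENNReal.ofReal (max (φ ω (-1)) 0) + ENNReal.ofReal (max (-φ ω 0) 0) := fun ω => by
    rw [← ENNReal.ofReal_add (by positivity) (by positivity),
      ← ENNReal.ofReal_add (by positivity) (by positivity)]
    exact ENNReal.ofReal_le_ofReal (hconv ω).abs_rightDeriv_zero_le
  refine ⟨f, measurable_rightDeriv hsec fun ω =>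
      (hconv ω).differentiableWithinAt_Ioi_of_mem_interior (by simp),
    fun ω => iSup_le fun x => EReal.coe_le_coe (by linarith [hsub ω x]), ?_, ?_⟩
  · exact (iSup_mono fun P => lintegral_mono fun ω => iSup_le fun x =>
      ENNReal.ofReal_le_ofReal ((hsub ω x).trans (le_max_left _ _))).trans_lt hminus
  · calc _ ≤ _ := iSup_mono fun P => lintegral_mono (habs ·)
      _ ≤ _ := (iSup_lintegral_add_le _ (by fun_prop)).trans
        (add_le_add_left (iSup_lintegral_add_le _ (by fun_prop)) _)
      _ < ⊤ := ENNReal.add_lt_top.2 ⟨ENNReal.add_lt_top.2 ⟨hplus 1, hplus (-1)⟩, hminus⟩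

theorem stmt_7 {Ω : Type*} [TopologicalSpace Ω] [PolishSpace Ω]
    [MeasurableSpace Ω] [BorelSpace Ω]
    (Ps : Set (Measure Ω)) (hPprob : ∀ P ∈ Ps, IsProbabilityMeasure P)
    (φ : Ω → ℝ → ℝ)
    (hφmeas : Measurable (Function.uncurry φ))
    (hconv : ∀ ω, ConvexOn ℝ Set.univ (φ ω))
    (hplus : ∀ x : ℝ,
      (⨆ P : Ps, ∫⁻ ω, ENNReal.ofReal (max (φ ω x) 0) ∂(P : Measure Ω)) < ⊤)
    (hminus :
      (⨆ P : Ps, ∫⁻ ω, ENNReal.ofReal (max (-(φ ω 0)) 0) ∂(P : Measure Ω)) < ⊤) :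
    ∃ f : Ω → ℝ, Measurable f ∧
      (∀ ω, (⨆ x : ℝ, ((x * f ω - φ ω x : ℝ) : EReal)) ≤ ((1 - φ ω 0 : ℝ) : EReal)) ∧
      (⨆ P : Ps, ∫⁻ ω, ⨆ x : ℝ,
          ENNReal.ofReal (x * f ω - φ ω x) ∂(P : Measure Ω)) < ⊤ ∧
      (⨆ P : Ps, ∫⁻ ω, ENNReal.ofReal |f ω| ∂(P : Measure Ω)) < ⊤ :=
  stmt_7_general Ps φ hφmeas hconv hplus hminus
end

section
/- Let Ω be a Polish space, P a Borel probability measure on Ω, ν a finite signed Borel measure with ν ≪ P, and φ: Ω × ℝ → ℝ a jointly measurable function such that φ(ω,·) is convex and finite, E_P[φ(·,x)⁺] < ∞ for all x ∈ ℝ, and there exists ζ ∈ L¹(P) with E_P[φ*(·,ζ)⁺] < ∞. Then sup over bounded continuous f of (∫ f dν − E_P[φ(·,f)]) equals sup over essentially bounded Borel ξ of (∫ ξ dν − E_P[φ(·,ξ)]). -/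
/-!
Bounded continuous functions are bounded Borel functions, which gives one inequality. Conversely,
let `ξ` be Borel with `|ξ| ≤ C` a.e. Bounded continuous functions approximate `ξ` in `L¹(P)`, hence
a.e. along a subsequence, and after clamping to `[-C, C]` they stay bounded by `C`. On `[-C, C]`,
convexity bounds `φ(ω, ·)` above by `max (φ(ω, -C), φ(ω, C))`, and the Fenchel–Young inequality
`x ζ - φ(ω, x) ≤ φ*(ω, ζ)⁺` bounds it below, so
`κ_C = φ(·, C)⁺ + φ(·, -C)⁺ + C |ζ| + φ*(·, ζ)⁺` is an integrable envelope and dominated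
convergence carries both integrals to the limit.
-/

open MeasureTheory Filter Topology
open scoped ENNReal BoundedContinuousFunction

/-- `(f*(z))⁺`, the positive part of the Fenchel conjugate of `f` at `z`. -/
noncomputable def fenchelConjPos (f : ℝ → ℝ) (z : ℝ) : ℝ≥0∞ :=
  ⨆ x : ℝ, ENNReal.ofReal (x * z - f x)

lemma fenchelConjPos_eq_iSup_rat {f : ℝ → ℝ} (hf : Continuous f) (z : ℝ) :
    fenchelConjPos f z = ⨆ q : ℚ, ENNReal.ofReal (q * z - f q) := by
  have hcont : Continuous fun x : ℝ => ENNReal.ofReal (x * z - f x) :=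
    ENNReal.continuous_ofReal.comp (by fun_prop)
  rw [fenchelConjPos, ← Rat.denseRange_cast.ciSup' hcont]
  exact iSup_range' (fun x : ℝ => ENNReal.ofReal (x * z - f x)) Rat.cast

lemma measurable_fenchelConjPos {Ω : Type*} [MeasurableSpace Ω] {φ : Ω → ℝ → ℝ}
    (hφ : Measurable (Function.uncurry φ)) (hcont : ∀ ω, Continuous (φ ω)) :
    Measurable fun p : Ω × ℝ => fenchelConjPos (φ p.1) p.2 := by
  simp_rw [fenchelConjPos_eq_iSup_rat (hcont _)]
  refine Measurable.iSup fun q => ENNReal.measurable_ofReal.comp ?_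
  exact (measurable_const.mul measurable_snd).sub
    (hφ.comp (measurable_fst.prodMk measurable_const))

lemma sub_le_toReal_fenchelConjPos {f : ℝ → ℝ} {z : ℝ} (h : fenchelConjPos f z ≠ ⊤) (x : ℝ) :
    x * z - f x ≤ (fenchelConjPos f z).toReal :=
  (ENNReal.ofReal_le_iff_le_toReal h).1 (le_iSup (fun y => ENNReal.ofReal (y * z - f y)) x)

lemma ConvexOn.le_max_of_abs_le {f : ℝ → ℝ} (hf : ConvexOn ℝ Set.univ f) {c x : ℝ}
    (hx : |x| ≤ c) : f x ≤ max (f (-c)) (f c) := by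
  refine hf.le_on_segment trivial trivial ?_
  rw [segment_eq_Icc (neg_le_self ((abs_nonneg x).trans hx))]
  exact abs_le.1 hx

lemma ConvexOn.abs_le_of_abs_le {f : ℝ → ℝ} (hf : ConvexOn ℝ Set.univ f) {c z x : ℝ}
    (hx : |x| ≤ c) (hz : fenchelConjPos f z ≠ ⊤) :
    |f x| ≤ max (f c) 0 + max (f (-c)) 0 + c * |z| + (fenchelConjPos f z).toReal := by
  have hup := hf.le_max_of_abs_le hx
  have hlow := sub_le_toReal_fenchelConjPos hz x
  have hxz : |x * z| ≤ c * |z| := by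
    rw [abs_mul]
    exact mul_le_mul_of_nonneg_right hx (abs_nonneg z)
  have hxz' : 0 ≤ c * |z| := (abs_nonneg _).trans hxz
  have hH : 0 ≤ (fenchelConjPos f z).toReal := ENNReal.toReal_nonneg
  have hc := le_max_right (f c) 0
  have hc' := le_max_right (f (-c)) 0
  rw [abs_le]
  constructor
  · linarith [neg_abs_le (x * z)]
  · rcases le_max_iff.1 hup with h | h <;> linarith [le_max_left (f c) 0, le_max_left (f (-c)) 0]

lemma exists_integrable_envelope {Ω : Type*} [MeasurableSpace Ω] {P : Measure Ω}
    {φ : Ω → ℝ → ℝ} (hφ : Measurable (Function.uncurry φ))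
    (hconv : ∀ ω, ConvexOn ℝ Set.univ (φ ω))
    (hplus : ∀ x : ℝ, Integrable (fun ω => max (φ ω x) 0) P)
    {ζ : Ω → ℝ} (hζ : Integrable ζ P) (hζstar : ∫⁻ ω, fenchelConjPos (φ ω) (ζ ω) ∂P < ⊤)
    (c : ℝ) : ∃ κ : Ω → ℝ, Integrable κ P ∧ ∀ᵐ ω ∂P, ∀ x, |x| ≤ c → |φ ω x| ≤ κ ω := by
  have hmeas : AEMeasurable (fun ω => fenchelConjPos (φ ω) (ζ ω)) P :=
    (measurable_fenchelConjPos hφ fun ω => (hconv ω).locallyLipschitz.continuous).comp_aemeasurable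
      (f := fun ω => (ω, ζ ω)) (aemeasurable_id'.prodMk hζ.aemeasurable)
  refine ⟨fun ω => max (φ ω c) 0 + max (φ ω (-c)) 0 + c * |ζ ω|
    + (fenchelConjPos (φ ω) (ζ ω)).toReal, ?_, ?_⟩
  · exact (((hplus c).add (hplus (-c))).add (hζ.abs.const_mul c)).add
      (integrable_toReal_of_lintegral_ne_top hmeas hζstar.ne)
  · filter_upwards [ae_lt_top' hmeas hζstar.ne] with ω hω x hx
    exact (hconv ω).abs_le_of_abs_le hx hω.ne

section Approximation

variable {Ω : Type*} [TopologicalSpace Ω] [NormalSpace Ω] [MeasurableSpace Ω] [BorelSpace Ω]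
  {μ : Measure Ω} [μ.WeaklyRegular]

lemma MeasureTheory.MemLp.exists_seq_boundedContinuous_tendsto_ae {E : Type*} [NormedAddCommGroup E]
    [NormedSpace ℝ E] [SecondCountableTopologyEither Ω E] {p : ℝ≥0∞} (hp0 : p ≠ 0) (hp : p ≠ ∞)
    {f : Ω → E} (hf : MemLp f p μ) :
    ∃ g : ℕ → Ω →ᵇ E, ∀ᵐ ω ∂μ, Tendsto (fun n => g n ω) atTop (𝓝 (f ω)) := by
  have happrox (n : ℕ) : ∃ g : Ω →ᵇ E, eLpNorm (f - ⇑g) p μ ≤ (n : ℝ≥0∞)⁻¹ := by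
    obtain ⟨g, hg, -⟩ := hf.exists_boundedContinuous_eLpNorm_sub_le hp
      (ENNReal.inv_ne_zero.2 (ENNReal.natCast_ne_top n))
    exact ⟨g, hg⟩
  choose g hg using happrox
  have hmeas : TendstoInMeasure μ (fun n => (g n : Ω → E)) atTop f := by
    refine tendstoInMeasure_of_tendsto_eLpNorm hp0
      (fun n => (g n).continuous.aestronglyMeasurable) hf.1 ?_
    refine tendsto_of_tendsto_of_tendsto_of_le_of_le tendsto_const_nhds
      ENNReal.tendsto_inv_nat_nhds_zero (fun n => zero_le) fun n => ?_
    rw [eLpNorm_sub_comm]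
    exact hg n
  obtain ⟨ns, -, hns⟩ := hmeas.exists_seq_tendsto_ae
  exact ⟨fun i => g (ns i), hns⟩

lemma exists_seq_boundedContinuous_abs_le_tendsto_ae [IsFiniteMeasure μ] {ξ : Ω → ℝ}
    (hξ : AEStronglyMeasurable ξ μ) {C : ℝ} (hC : 0 ≤ C) (hξC : ∀ᵐ ω ∂μ, |ξ ω| ≤ C) :
    ∃ g : ℕ → Ω →ᵇ ℝ, (∀ n ω, |g n ω| ≤ C) ∧
      ∀ᵐ ω ∂μ, Tendsto (fun n => g n ω) atTop (𝓝 (ξ ω)) := by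
  have hξ1 : MemLp ξ 1 μ := .of_bound hξ C hξC
  obtain ⟨f, hf⟩ := hξ1.exists_seq_boundedContinuous_tendsto_ae one_ne_zero ENNReal.one_ne_top
  let clamp : ℝ → ℝ := fun t => Set.projIcc (-C) C (neg_le_self hC) t
  have hclamp : Continuous clamp := continuous_subtype_val.comp continuous_projIcc
  have hclampC (t : ℝ) : |clamp t| ≤ C := abs_le.2 (Set.projIcc (-C) C (neg_le_self hC) t).2
  refine ⟨fun n => .ofNormedAddCommGroup (clamp ∘ f n) (hclamp.comp (f n).continuous) C
    fun ω => hclampC _, fun n ω => hclampC _, ?_⟩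
  filter_upwards [hf, hξC] with ω hω hωC
  have hfix : clamp (ξ ω) = ξ ω := by
    simp only [clamp, Set.projIcc_of_mem _ (abs_le.1 hωC)]
  rw [← hfix]
  exact (hclamp.tendsto (ξ ω)).comp hω

end Approximation

section DominatedConvergence

variable {Ω : Type*} [MeasurableSpace Ω] {μ : Measure Ω} {C : ℝ} {g : ℕ → Ω → ℝ} {ξ : Ω → ℝ}

lemma tendsto_integral_mul_of_tendsto_ae {ρ : Ω → ℝ} (hρ : Integrable ρ μ)
    (hg : ∀ n, AEStronglyMeasurable (g n) μ) (hgC : ∀ n ω, |g n ω| ≤ C)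
    (hlim : ∀ᵐ ω ∂μ, Tendsto (fun n => g n ω) atTop (𝓝 (ξ ω))) :
    Tendsto (fun n => ∫ ω, g n ω * ρ ω ∂μ) atTop (𝓝 (∫ ω, ξ ω * ρ ω ∂μ)) := by
  refine tendsto_integral_of_dominated_convergence (fun ω => C * |ρ ω|)
    (fun n => (hg n).mul hρ.1) (hρ.abs.const_mul C) (fun n => ae_of_all _ fun ω => ?_)
    (hlim.mono fun ω h => h.mul tendsto_const_nhds)
  rw [Real.norm_eq_abs, abs_mul]
  exact mul_le_mul_of_nonneg_right (hgC n ω) (abs_nonneg _)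

lemma tendsto_integral_comp_of_tendsto_ae {φ : Ω → ℝ → ℝ}
    (hφ : Measurable (Function.uncurry φ)) (hcont : ∀ ω, Continuous (φ ω)) {κ : Ω → ℝ}
    (hκ : Integrable κ μ) (hdom : ∀ᵐ ω ∂μ, ∀ x, |x| ≤ C → |φ ω x| ≤ κ ω)
    (hg : ∀ n, AEMeasurable (g n) μ) (hgC : ∀ n ω, |g n ω| ≤ C)
    (hlim : ∀ᵐ ω ∂μ, Tendsto (fun n => g n ω) atTop (𝓝 (ξ ω))) :
    Tendsto (fun n => ∫ ω, φ ω (g n ω) ∂μ) atTop (𝓝 (∫ ω, φ ω (ξ ω) ∂μ)) := by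
  refine tendsto_integral_of_dominated_convergence κ
    (fun n => (hφ.comp_aemeasurable (aemeasurable_id.prodMk (hg n))).aestronglyMeasurable) hκ
    (fun n => hdom.mono fun ω h => h _ (hgC n ω)) ?_
  filter_upwards [hlim] with ω h
  exact ((hcont ω).tendsto (ξ ω)).comp h

end DominatedConvergence

theorem stmt_8_general {Ω : Type*} [TopologicalSpace Ω] [PolishSpace Ω]
    [MeasurableSpace Ω] [BorelSpace Ω]
    (P : Measure Ω) [IsProbabilityMeasure P]
    (ν : SignedMeasure Ω)
    (φ : Ω → ℝ → ℝ)
    (hφmeas : Measurable (Function.uncurry φ))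
    (hconv : ∀ ω, ConvexOn ℝ Set.univ (φ ω))
    (hplus : ∀ x : ℝ, Integrable (fun ω => max (φ ω x) 0) P)
    (ζ : Ω → ℝ) (hζ : Integrable ζ P)
    (hζstar : (∫⁻ ω, ⨆ x : ℝ, ENNReal.ofReal (x * ζ ω - φ ω x) ∂P) < ⊤) :
    (⨆ f : BoundedContinuousFunction Ω ℝ,
        ((∫ ω, f ω * ν.rnDeriv P ω ∂P - ∫ ω, φ ω (f ω) ∂P : ℝ) : EReal)) =
    (⨆ ξ : {ξ : Ω → ℝ // Measurable ξ ∧ ∃ C : ℝ, ∀ᵐ ω ∂P, |ξ ω| ≤ C},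
        ((∫ ω, (ξ : Ω → ℝ) ω * ν.rnDeriv P ω ∂P
          - ∫ ω, φ ω ((ξ : Ω → ℝ) ω) ∂P : ℝ) : EReal)) := by
  refine le_antisymm (iSup_le fun f => le_iSup_of_le
    ⟨f, f.continuous.measurable, ‖f‖, ae_of_all _ f.norm_coe_le_norm⟩ le_rfl) ?_
  refine iSup_le fun ⟨ξ, hξ, C, hξC⟩ => ?_
  have hC : 0 ≤ C := (abs_nonneg _).trans hξC.exists.choose_spec
  let _ := TopologicalSpace.upgradeIsCompletelyMetrizable Ω
  obtain ⟨g, hgC, hlim⟩ :=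
    exists_seq_boundedContinuous_abs_le_tendsto_ae hξ.aestronglyMeasurable hC hξC
  obtain ⟨κ, hκ, hdom⟩ := exists_integrable_envelope hφmeas hconv hplus hζ hζstar C
  have hJ := (tendsto_integral_mul_of_tendsto_ae (SignedMeasure.integrable_rnDeriv ν P)
      (fun n => (g n).continuous.aestronglyMeasurable) hgC hlim).sub
    (tendsto_integral_comp_of_tendsto_ae hφmeas (fun ω => (hconv ω).locallyLipschitz.continuous)
      hκ hdom (fun n => (g n).continuous.aemeasurable) hgC hlim)
  exact le_of_tendsto ((continuous_coe_real_ereal.tendsto _).comp hJ)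
    (Eventually.of_forall fun n => le_iSup_of_le (g n) le_rfl)

theorem stmt_8 {Ω : Type*} [TopologicalSpace Ω] [PolishSpace Ω]
    [MeasurableSpace Ω] [BorelSpace Ω]
    (P : Measure Ω) [IsProbabilityMeasure P]
    (ν : SignedMeasure Ω) (hν : ν ≪ᵥ P.toENNRealVectorMeasure)
    (φ : Ω → ℝ → ℝ)
    (hφmeas : Measurable (Function.uncurry φ))
    (hconv : ∀ ω, ConvexOn ℝ Set.univ (φ ω))
    (hplus : ∀ x : ℝ, Integrable (fun ω => max (φ ω x) 0) P)
    (ζ : Ω → ℝ) (hζ : Integrable ζ P)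
    (hζstar : (∫⁻ ω, ⨆ x : ℝ, ENNReal.ofReal (x * ζ ω - φ ω x) ∂P) < ⊤) :
    (⨆ f : BoundedContinuousFunction Ω ℝ,
        ((∫ ω, f ω * ν.rnDeriv P ω ∂P - ∫ ω, φ ω (f ω) ∂P : ℝ) : EReal)) =
    (⨆ ξ : {ξ : Ω → ℝ // Measurable ξ ∧ ∃ C : ℝ, ∀ᵐ ω ∂P, |ξ ω| ≤ C},
        ((∫ ω, (ξ : Ω → ℝ) ω * ν.rnDeriv P ω ∂P
          - ∫ ω, φ ω ((ξ : Ω → ℝ) ω) ∂P : ℝ) : EReal)) :=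
  stmt_8_general P ν φ hφmeas hconv hplus ζ hζ hζstar
end

section
/- Let Ω be a Polish space and let g: Ω → ℝ be upper semicontinuous with g⁺ ∈ L¹(P) for all P in a set 𝒫 of Borel probability measures satisfying lim_n sup_{P∈𝒫} E_P[g⁺·1_{{g>n}}] = 0. Then the map P ↦ E_P[g] (with values in [−∞, ∞)) is upper semicontinuous on 𝒫 with respect to the weak topology induced by C_b(Ω). -/
/-!
Truncating `g` below at `-m` and above at `n` gives bounded upper semicontinuous functions, whose
expectations are weakly upper semicontinuous by the portmanteau theorem: a discrete layer-cake
decomposition writes such an integral, up to an arbitrarily small error, as a finite combination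
of measures of closed superlevel sets. The uniform tail condition makes the truncation at `n` a
uniform approximation on `Ps`, so `P ↦ E_P[max g (-m)]` is upper semicontinuous on `Ps`; by
monotone convergence `E_P[g]` is the infimum over `m` of these functions, hence upper
semicontinuous as well.
-/

open MeasureTheory Filter Topology Set ENNReal

namespace EReal

theorem continuous_add_coe (r : ℝ) : Continuous fun x : EReal => x + r :=
  continuous_iff_continuousAt.2 fun _ =>
    (continuousAt_add (Or.inr (coe_ne_bot r)) (Or.inr (coe_ne_top r))).comp
      (continuous_id.prodMk continuous_const).continuousAt

theorem continuous_sub_coe (r : ℝ) : Continuous fun x : EReal => x - r := by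
  simpa only [sub_eq_add_neg, ← coe_neg] using continuous_add_coe (-r)

theorem continuous_coe_sub (r : ℝ) : Continuous fun x : EReal => (r : EReal) - x := by
  simpa only [Function.comp_def, sub_eq_add_neg, add_comm] using
    (continuous_add_coe r).comp continuous_neg

end EReal

section Floor

variable {a y : ℝ}

theorem card_filter_succ_mul_le_eq_floor_div {N : ℕ} (ha : 0 < a) (hy : y ≤ N * a) :
    ((Finset.range N).filter fun k : ℕ => ((k : ℝ) + 1) * a ≤ y).card = ⌊y / a⌋₊ := by
  have hmem : ∀ k : ℕ, ((k : ℝ) + 1) * a ≤ y ↔ k < ⌊y / a⌋₊ := fun k => by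
    rw [← le_div_iff₀ ha, Nat.lt_iff_add_one_le, Nat.le_floor_iff' k.succ_ne_zero]
    push_cast; rfl
  rw [← Finset.card_range ⌊y / a⌋₊]
  congr 1
  ext k
  simp only [Finset.mem_filter, Finset.mem_range, hmem, and_iff_right_iff_imp]
  intro hk
  have : ((k : ℝ) + 1) * a ≤ N * a := ((hmem k).2 hk).trans hy
  have : (k : ℝ) + 1 ≤ N := le_of_mul_le_mul_right this ha
  exact_mod_cast this

theorem ENNReal.ofReal_mul_floor_div_le (ha : 0 < a) (y : ℝ) :
    ENNReal.ofReal a * ⌊y / a⌋₊ ≤ ENNReal.ofReal y := by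
  rcases le_or_gt 0 y with hy | hy
  · rw [← ofReal_natCast, ← ofReal_mul ha.le]
    refine ofReal_le_ofReal ?_
    calc a * ⌊y / a⌋₊ ≤ a * (y / a) := by gcongr; exact Nat.floor_le (by positivity)
      _ = y := mul_div_cancel₀ y ha.ne'
  · simp [Nat.floor_of_nonpos (div_nonpos_of_nonpos_of_nonneg hy.le ha.le)]

theorem ENNReal.ofReal_le_mul_one_add_floor_div (ha : 0 < a) (y : ℝ) :
    ENNReal.ofReal y ≤ ENNReal.ofReal a * (1 + ⌊y / a⌋₊) := by
  rw [← ofReal_natCast, ← ofReal_one, ← ofReal_add zero_le_one (by positivity),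
    ← ofReal_mul ha.le]
  refine ofReal_le_ofReal ?_
  have := Nat.lt_floor_add_one (y / a)
  rw [div_lt_iff₀ ha] at this
  linarith

end Floor

namespace ENNReal

theorem ofReal_max_neg_add_le {m n : ℝ} (hm : 0 ≤ m) (hn : 0 ≤ n) (x : ℝ) :
    ENNReal.ofReal (max x (-m) + m)
      ≤ ENNReal.ofReal (min (max x (-m)) n + m) + {y | n < y}.indicator ENNReal.ofReal x := by
  by_cases hx : n < x
  · have hmax : max x (-m) = x := max_eq_left (by linarith)
    rw [indicator_of_mem (show x ∈ {y | n < y} from hx), hmax, min_eq_right hx.le]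
    calc ENNReal.ofReal (x + m) ≤ ENNReal.ofReal (n + m + x) := ofReal_le_ofReal (by linarith)
      _ ≤ _ := ofReal_add_le
  · rw [indicator_of_notMem (show x ∉ {y | n < y} from hx), add_zero,
      min_eq_left (max_le (not_lt.1 hx) (by linarith))]

theorem toEReal_sub_toEReal_eq_of_add_eq {a b k : ℝ≥0∞} {c : ℝ} (hc : 0 ≤ c) (hb : b ≠ ∞)
    (h : k + b = a + ENNReal.ofReal c) : a.toEReal - b.toEReal = k.toEReal - c := by
  by_cases ha : a = ∞
  · have hk : k = ∞ := by simpa [ha, hb] using h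
    rw [ha, hk, ← EReal.coe_ennreal_toReal hb]
    exact EReal.top_sub_coe _
  · have hk : k ≠ ∞ := by
      rintro rfl
      exact add_ne_top.2 ⟨ha, ofReal_ne_top (r := c)⟩ (by simpa using h.symm)
    have := congrArg ENNReal.toReal h
    rw [toReal_add hk hb, toReal_add ha ofReal_ne_top, toReal_ofReal hc] at this
    rw [← EReal.coe_ennreal_toReal ha, ← EReal.coe_ennreal_toReal hb,
      ← EReal.coe_ennreal_toReal hk, ← EReal.coe_sub, ← EReal.coe_sub]
    congr 1
    linarith

end ENNReal

theorem upperSemicontinuousOn_of_le_add_of_tendsto {X : Type*} [TopologicalSpace X] {s : Set X}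
    {f : X → ℝ≥0∞} {F : ℕ → X → ℝ≥0∞} {δ : ℕ → ℝ≥0∞} (hF : ∀ n, UpperSemicontinuousOn (F n) s)
    (hFf : ∀ n, ∀ x ∈ s, F n x ≤ f x) (hfF : ∀ n, ∀ x ∈ s, f x ≤ F n x + δ n)
    (hδ : Tendsto δ atTop (𝓝 0)) : UpperSemicontinuousOn f s := by
  intro x hx y hy
  have hlim : Tendsto (fun n => f x + δ n) atTop (𝓝 (f x)) := by
    simpa using tendsto_const_nhds.add hδ
  obtain ⟨n, hn⟩ := (hlim.eventually (gt_mem_nhds hy)).exists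
  have hFδ : UpperSemicontinuousOn (fun z => F n z + δ n) s :=
    (continuous_add_const (δ n)).comp_upperSemicontinuousOn (hF n) fun _ _ h => by
      simp only; gcongr
  filter_upwards [hFδ x hx y ((add_le_add (hFf n x hx) le_rfl).trans_lt hn),
    self_mem_nhdsWithin] with z hz hzs
  exact (hfF n z hzs).trans_lt hz

namespace MeasureTheory

variable {α : Type*} [MeasurableSpace α]

theorem lintegral_floor_div_eq_sum_measure {μ : Measure α} {h : α → ℝ} (hh : Measurable h)
    {a : ℝ} (ha : 0 < a) {N : ℕ} (hN : ∀ x, h x ≤ N * a) :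
    ∫⁻ x, (⌊h x / a⌋₊ : ℝ≥0∞) ∂μ = ∑ k ∈ Finset.range N, μ {x | ((k : ℝ) + 1) * a ≤ h x} := by
  have hset : ∀ k : ℕ, MeasurableSet {x | ((k : ℝ) + 1) * a ≤ h x} :=
    fun k => measurableSet_le measurable_const hh
  have hfloor : ∀ x, (⌊h x / a⌋₊ : ℝ≥0∞)
      = ∑ k ∈ Finset.range N, {x | ((k : ℝ) + 1) * a ≤ h x}.indicator 1 x := fun x => by
    simp only [indicator_apply, Pi.one_apply, Finset.sum_boole]
    rw [← card_filter_succ_mul_le_eq_floor_div ha (hN x)]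
    rfl
  simp_rw [hfloor]
  rw [lintegral_finsetSum _ fun k _ => measurable_one.indicator (hset k)]
  simp_rw [lintegral_indicator_one (hset _)]

/-- The expectation `E_μ[f] = ∫ f⁺ dμ - ∫ f⁻ dμ ∈ [-∞, ∞]`, with the junk value `⊤ - ⊤ = ⊥`. -/
noncomputable def erealIntegral (f : α → ℝ) (μ : Measure α) : EReal :=
  (∫⁻ x, ENNReal.ofReal (f x) ∂μ).toEReal - (∫⁻ x, ENNReal.ofReal (-f x) ∂μ).toEReal

theorem erealIntegral_eq_iInf_max_neg {f : α → ℝ} {μ : Measure α} (hf : Measurable f)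
    (hfin : ∫⁻ x, ENNReal.ofReal (f x) ∂μ ≠ ∞) :
    erealIntegral f μ = ⨅ m : ℕ, erealIntegral (fun x => max (f x) (-m)) μ := by
  set A := ∫⁻ x, ENNReal.ofReal (f x) ∂μ
  set B : ℕ → ℝ≥0∞ := fun m => ∫⁻ x, min (ENNReal.ofReal (-f x)) m ∂μ
  have hpos : ∀ m : ℕ, ∫⁻ x, ENNReal.ofReal (max (f x) (-m)) ∂μ = A := fun m => by
    simp [A, ofReal_of_nonpos (neg_nonpos.2 m.cast_nonneg)]
  have hneg : ∀ m : ℕ, ∫⁻ x, ENNReal.ofReal (-max (f x) (-m)) ∂μ = B m := fun m => by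
    simp [B, neg_sup]
  have hB : ⨆ m, B m = ∫⁻ x, ENNReal.ofReal (-f x) ∂μ := by
    rw [← lintegral_iSup (f := fun (m : ℕ) x => min (ENNReal.ofReal (-f x)) m)
      (fun _ => hf.neg.ennreal_ofReal.min measurable_const)
      fun _ _ hmn _ => min_le_min_left _ (Nat.cast_le.2 hmn)]
    simp_rw [← inf_iSup_eq, ENNReal.iSup_natCast, inf_top_eq]
  have hcont : Continuous fun b : ℝ≥0∞ => A.toEReal - b.toEReal := by
    rw [← EReal.coe_ennreal_toReal hfin]
    exact (EReal.continuous_coe_sub _).comp continuous_coe_ennreal_ereal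
  simp only [erealIntegral, hpos, hneg]
  rw [← hB, Antitone.map_ciSup_of_continuousAt hcont.continuousAt
    fun _ _ hbc => EReal.sub_le_sub le_rfl (EReal.coe_ennreal_le_coe_ennreal_iff.2 hbc)]

theorem erealIntegral_eq_lintegral_add_sub {f : α → ℝ} {μ : Measure α} [IsProbabilityMeasure μ]
    (hf : Measurable f) {c : ℝ} (hc : 0 ≤ c) (hfc : ∀ x, -c ≤ f x) :
    erealIntegral f μ = (∫⁻ x, ENNReal.ofReal (f x + c) ∂μ).toEReal - c := by
  have hpt : ∀ x, ENNReal.ofReal (f x + c) + ENNReal.ofReal (-f x)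
      = ENNReal.ofReal (f x) + ENNReal.ofReal c := fun x => by
    rcases le_total 0 (f x) with h | h
    · rw [ofReal_of_nonpos (neg_nonpos.2 h), ofReal_add h hc, add_zero]
    · rw [ofReal_of_nonpos h, ← ofReal_add (by linarith [hfc x]) (by linarith), zero_add]
      ring_nf
  refine ENNReal.toEReal_sub_toEReal_eq_of_add_eq hc ?_ ?_
  · refine ne_top_of_le_ne_top (ofReal_ne_top (r := c)) ?_
    calc ∫⁻ x, ENNReal.ofReal (-f x) ∂μ ≤ ∫⁻ _, ENNReal.ofReal c ∂μ :=
          lintegral_mono fun x => ofReal_le_ofReal (by linarith [hfc x])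
      _ = ENNReal.ofReal c := by simp
  · rw [← lintegral_add_right (g := fun x => ENNReal.ofReal (-f x)) _ hf.neg.ennreal_ofReal,
      lintegral_congr hpt, lintegral_add_right _ measurable_const, lintegral_const, measure_univ,
      mul_one]

end MeasureTheory

namespace MeasureTheory.ProbabilityMeasure

variable {Ω : Type*} [TopologicalSpace Ω] [MeasurableSpace Ω] [OpensMeasurableSpace Ω]
  [HasOuterApproxClosed Ω]

theorem upperSemicontinuous_measure_of_isClosed {F : Set Ω} (hF : IsClosed F) :
    UpperSemicontinuous fun Q : ProbabilityMeasure Ω => (Q : Measure Ω) F :=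
  upperSemicontinuous_iff_limsup_le.2 fun _ => limsup_measure_closed_le_of_tendsto tendsto_id hF

theorem upperSemicontinuous_lintegral_ofReal {h : Ω → ℝ} (hh : UpperSemicontinuous h) {C : ℝ}
    (hC : ∀ x, h x ≤ C) :
    UpperSemicontinuous fun Q : ProbabilityMeasure Ω => ∫⁻ x, ENNReal.ofReal (h x) ∂Q := by
  intro P b hPb
  obtain ⟨r, hr, hrb⟩ := ENNReal.lt_iff_exists_add_pos_lt.1 hPb
  set a : ℝ := (r : ℝ)
  have ha : 0 < a := by positivity
  set N := ⌈C / a⌉₊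
  set F : ℕ → Set Ω := fun k => {x | ((k : ℝ) + 1) * a ≤ h x}
  have hF : ∀ k, IsClosed (F k) := fun k => by
    have : F k = (h ⁻¹' Iio (((k : ℝ) + 1) * a))ᶜ := by ext; simp [F, not_lt]
    exact this ▸ (hh.isOpen_preimage _).isClosed_compl
  have hNa : ∀ x, h x ≤ N * a := fun x =>
    (hC x).trans ((div_le_iff₀ ha).1 (Nat.le_ceil _))
  have hlevel : ∀ Q : ProbabilityMeasure Ω,
      ∫⁻ x, (⌊h x / a⌋₊ : ℝ≥0∞) ∂Q = ∑ k ∈ Finset.range N, (Q : Measure Ω) (F k) :=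
    fun Q => lintegral_floor_div_eq_sum_measure hh.measurable ha hNa
  set G : ProbabilityMeasure Ω → ℝ≥0∞ :=
    fun Q => ENNReal.ofReal a * (1 + ∑ k ∈ Finset.range N, (Q : Measure Ω) (F k))
  have hG : UpperSemicontinuous G :=
    ((ENNReal.continuous_const_mul ofReal_ne_top).comp
        (continuous_const_add 1)).comp_upperSemicontinuous
      (upperSemicontinuous_sum fun k _ => upperSemicontinuous_measure_of_isClosed (hF k))
      fun _ _ hst => by simp only [Function.comp_apply]; gcongr
  have hle : ∀ Q : ProbabilityMeasure Ω, ∫⁻ x, ENNReal.ofReal (h x) ∂Q ≤ G Q := by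
    intro Q
    calc ∫⁻ x, ENNReal.ofReal (h x) ∂Q
        ≤ ∫⁻ x, ENNReal.ofReal a * (1 + ⌊h x / a⌋₊) ∂Q :=
          lintegral_mono fun x => ofReal_le_mul_one_add_floor_div ha (h x)
      _ = G Q := by
          rw [lintegral_const_mul' _ _ ofReal_ne_top, lintegral_add_left measurable_const,
            hlevel, lintegral_const, measure_univ, mul_one]
  have hGP : G P < b :=
    calc G P = ENNReal.ofReal a + ∫⁻ x, ENNReal.ofReal a * ⌊h x / a⌋₊ ∂P := by
          rw [lintegral_const_mul' _ _ ofReal_ne_top, hlevel, ← mul_one_add]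
      _ ≤ ENNReal.ofReal a + ∫⁻ x, ENNReal.ofReal (h x) ∂P := by
          gcongr with x; exact ofReal_mul_floor_div_le ha (h x)
      _ < b := by rwa [ofReal_coe_nnreal, add_comm]
  exact (hG P b hGP).mono fun Q hQ => (hle Q).trans_lt hQ

theorem upperSemicontinuousOn_lintegral_max_neg_add {Ps : Set (ProbabilityMeasure Ω)}
    {g : Ω → ℝ} (hg : UpperSemicontinuous g)
    (hgtail : Tendsto (fun n : ℕ => ⨆ P : Ps, ∫⁻ ω in {ω | (n : ℝ) < g ω},
      ENNReal.ofReal (g ω) ∂((P : ProbabilityMeasure Ω) : Measure Ω)) atTop (𝓝 0))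
    {m : ℝ} (hm : 0 ≤ m) :
    UpperSemicontinuousOn
      (fun Q : ProbabilityMeasure Ω => ∫⁻ x, ENNReal.ofReal (max (g x) (-m) + m) ∂Q) Ps := by
  have hgm : Measurable g := hg.measurable
  refine upperSemicontinuousOn_of_le_add_of_tendsto
    (F := fun (n : ℕ) Q => ∫⁻ x, ENNReal.ofReal (min (max (g x) (-m)) n + m) ∂Q)
    (fun n => (upperSemicontinuous_lintegral_ofReal ?_ (C := n + m) ?_).upperSemicontinuousOn _)
    (fun n Q _ => lintegral_mono fun x => ofReal_le_ofReal (by gcongr; exact min_le_left _ _))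
    (fun n Q hQ => ?_) hgtail
  · exact (by fun_prop : Continuous fun r : ℝ => min (max r (-m)) n + m).comp_upperSemicontinuous
      hg fun r s hrs => by simp only; gcongr
  · exact fun x => add_le_add (min_le_right _ _) le_rfl
  · calc ∫⁻ x, ENNReal.ofReal (max (g x) (-m) + m) ∂Q
        ≤ ∫⁻ x, ENNReal.ofReal (min (max (g x) (-m)) n + m)
            + {ω | (n : ℝ) < g ω}.indicator (fun ω => ENNReal.ofReal (g ω)) x ∂Q :=
          lintegral_mono fun x => ofReal_max_neg_add_le hm n.cast_nonneg (g x)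
      _ = ∫⁻ x, ENNReal.ofReal (min (max (g x) (-m)) n + m) ∂Q
            + ∫⁻ x in {ω | (n : ℝ) < g ω}, ENNReal.ofReal (g x) ∂Q := by
          rw [lintegral_add_left (by fun_prop), lintegral_indicator
            (measurableSet_lt measurable_const hgm)]
      _ ≤ _ := by
          gcongr
          exact le_iSup (fun P : Ps => ∫⁻ ω in {ω | (n : ℝ) < g ω},
            ENNReal.ofReal (g ω) ∂((P : ProbabilityMeasure Ω) : Measure Ω)) ⟨Q, hQ⟩

end MeasureTheory.ProbabilityMeasure

theorem stmt_9 {Ω : Type*} [TopologicalSpace Ω] [PolishSpace Ω]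
    [MeasurableSpace Ω] [BorelSpace Ω]
    (Ps : Set (ProbabilityMeasure Ω))
    (g : Ω → ℝ) (hg : UpperSemicontinuous g)
    (hgplus : ∀ P ∈ Ps, (∫⁻ ω, ENNReal.ofReal (g ω) ∂(P : Measure Ω)) < ⊤)
    (hgtail : Tendsto (fun n : ℕ =>
        ⨆ P : Ps, ∫⁻ ω in {ω | (n : ℝ) < g ω},
          ENNReal.ofReal (g ω) ∂((P : ProbabilityMeasure Ω) : Measure Ω))
        atTop (𝓝 0)) :
    UpperSemicontinuousOn (fun P : ProbabilityMeasure Ω =>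
      (∫⁻ ω, ENNReal.ofReal (g ω) ∂(P : Measure Ω)).toEReal
        - (∫⁻ ω, ENNReal.ofReal (-(g ω)) ∂(P : Measure Ω)).toEReal) Ps := by
  have hgm : Measurable g := hg.measurable
  have hiInf : ∀ P ∈ Ps, erealIntegral g P = ⨅ m : ℕ,
      ((∫⁻ x, ENNReal.ofReal (max (g x) (-m) + m) ∂(P : Measure Ω)).toEReal - (m : ℝ)) := by
    intro P hP
    rw [erealIntegral_eq_iInf_max_neg hgm (hgplus P hP).ne]
    congr 1 with m
    exact erealIntegral_eq_lintegral_add_sub (by fun_prop) m.cast_nonneg fun x => le_max_right _ _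
  have husc : UpperSemicontinuousOn (fun Q : ProbabilityMeasure Ω => ⨅ m : ℕ,
      ((∫⁻ x, ENNReal.ofReal (max (g x) (-m) + m) ∂(Q : Measure Ω)).toEReal - (m : ℝ))) Ps :=
    upperSemicontinuousOn_iInf fun m =>
      ((EReal.continuous_sub_coe m).comp continuous_coe_ennreal_ereal).comp_upperSemicontinuousOn
        (ProbabilityMeasure.upperSemicontinuousOn_lintegral_max_neg_add hg hgtail m.cast_nonneg)
        fun _ _ h => EReal.sub_le_sub (EReal.coe_ennreal_le_coe_ennreal_iff.2 h) le_rfl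
  exact fun P hP => UpperSemicontinuousWithinAt.congr_of_eventuallyEq (husc P hP) hP
    (eventually_nhdsWithin_of_forall fun Q hQ => (hiInf Q hQ).symm)
end

section
/- Let V: ℝ → ℝ ∪ {+∞} be a proper convex function, differentiable on (0,∞), with V'(α) → −∞ as α ↓ 0, and let P be a probability measure, η ≥ 0 a measurable function with P(η > 0) > 0, and Ψ a measurable function such that V(η) − ηΨ ∈ L¹(P). Then there exists α ∈ (0,1] with E_P[V(αη) − αηΨ] < V(0), i.e. the infimum over α ≥ 0 of α ↦ E_P[V(αη) − αηΨ] is not attained at α = 0. -/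
/-!
For each `ω`, `G_ω(α) := V(α η) - α η Ψ` is convex in `α` with `G_ω(0) = V(0)`, so its difference
quotient `(G_ω(α) - V(0)) / α` increases with `α`: on `(0, 1]` it is dominated by the integrable
`G_ω(1) - V(0)`, and as `α ↓ 0` it tends to `-∞` where `η > 0` (because `V'(0+) = -∞`) and is `0`
where `η = 0`. After truncation at `-1`, dominated convergence sends its expectation to
`-P(η > 0) < 0`, and then `E[G(α)] ≤ V(0) + α E[max(quotient, -1)] < V(0)` for small `α`.
-/

open MeasureTheory Filter Topology Set
open scoped ENNReal

section Convex

variable {f : ℝ → ℝ}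

theorem ConvexOn.comp_mul_sub_mul (hf : ConvexOn ℝ (Ici 0) f) {c : ℝ} (hc : 0 ≤ c) (p : ℝ) :
    ConvexOn ℝ (Ici 0) (fun α => f (α * c) - α * c * p) := by
  have hcomp : ConvexOn ℝ (Ici 0) (fun α => f (α * c)) :=
    (hf.comp_linearMap (LinearMap.mulRight ℝ c)).subset
      (fun α (hα : 0 ≤ α) => mul_nonneg hα hc) (convex_Ici 0)
  exact hcomp.sub ((LinearMap.mulRight ℝ (c * p)).concaveOn (convex_Ici 0)) |>.congr
    fun α _ => by simp [mul_assoc]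

theorem slope_comp_mul_sub_mul (f : ℝ → ℝ) (c p : ℝ) {α : ℝ} (hα : α ≠ 0) :
    slope (fun α => f (α * c) - α * c * p) 0 α = c * slope f 0 (α * c) - c * p := by
  rcases eq_or_ne c 0 with rfl | hc
  · simp [slope_def_field]
  · simp only [slope_def_field, zero_mul, sub_zero]
    field_simp
    ring

theorem ConvexOn.tendsto_slope_zero_atBot (hf : ConvexOn ℝ (Ici 0) f)
    (hf' : Tendsto (derivWithin f (Ioi 0)) (𝓝[>] 0) atBot) :
    Tendsto (slope f 0) (𝓝[>] 0) atBot := by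
  refine tendsto_atBot_mono' _ ?_ hf'
  filter_upwards [self_mem_nhdsWithin, hf'.eventually_ne_atBot 0] with x (hx : 0 < x) hx'
  -- `derivWithin` is junk `0` where `f` is not differentiable, so `hf'` forces differentiability
  have hdiff : DifferentiableWithinAt ℝ f (Ioi 0) x := by
    by_contra h
    exact hx' (derivWithin_zero_of_not_differentiableWithinAt h)
  have hderiv : derivWithin f (Ici 0) x = derivWithin f (Ioi 0) x := by
    rw [derivWithin_of_mem_nhds (Ici_mem_nhds hx), derivWithin_of_isOpen isOpen_Ioi hx]
  rw [← hderiv]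
  exact hf.slope_le_derivWithin self_mem_Ici hx.le hx
    ((hdiff.differentiableAt (Ioi_mem_nhds hx)).differentiableWithinAt)

theorem ConvexOn.tendsto_slope_comp_mul_sub_mul_atBot (hf : ConvexOn ℝ (Ici 0) f)
    (hf' : Tendsto (derivWithin f (Ioi 0)) (𝓝[>] 0) atBot) {c : ℝ} (hc : 0 < c) (p : ℝ) :
    Tendsto (slope (fun α => f (α * c) - α * c * p) 0) (𝓝[>] 0) atBot := by
  have hmul : Tendsto (· * c) (𝓝[>] 0) (𝓝[>] 0) :=
    tendsto_nhdsWithin_of_tendsto_nhds_of_eventually_within _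
      (((continuous_mul_const c).tendsto' 0 0 (zero_mul c)).mono_left nhdsWithin_le_nhds)
      (eventually_nhdsWithin_of_forall fun α (hα : 0 < α) => mul_pos hα hc)
  have hlim := tendsto_atBot_add_const_right _ (-(c * p))
    (((hf.tendsto_slope_zero_atBot hf').comp hmul).const_mul_atBot hc)
  refine hlim.congr' ?_
  filter_upwards [self_mem_nhdsWithin] with α (hα : 0 < α)
  rw [slope_comp_mul_sub_mul f c p hα.ne', sub_eq_add_neg]
  rfl

end Convex

section Integral

variable {Ω : Type*} [MeasurableSpace Ω] {μ : Measure Ω}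

theorem ContinuousOn.measurable_comp_of_nonneg {f : ℝ → ℝ} (hf : ContinuousOn f (Ioi 0))
    {g : Ω → ℝ} (hg : Measurable g) (hg0 : ∀ ω, 0 ≤ g ω) : Measurable fun ω => f (g ω) := by
  classical
  have hW : Measurable ((Ioi 0).piecewise f fun _ => f 0) :=
    hf.measurable_piecewise continuousOn_const measurableSet_Ioi
  convert hW.comp hg using 1
  funext ω
  rcases (hg0 ω).lt_or_eq with h | h
  · simp [Set.piecewise, h]
  · simp [Set.piecewise, ← h]

theorem lintegral_ofReal_sub_lintegral_ofReal_neg_le_integral {g h : Ω → ℝ}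
    (hh : Integrable h μ) (hgh : ∀ ω, g ω ≤ h ω) :
    (∫⁻ ω, ENNReal.ofReal (g ω) ∂μ).toEReal - (∫⁻ ω, ENNReal.ofReal (-g ω) ∂μ).toEReal
      ≤ ((∫ ω, h ω ∂μ : ℝ) : EReal) := by
  have hneg : ∫⁻ ω, ENNReal.ofReal (-h ω) ∂μ ≠ ∞ := hh.neg.lintegral_lt_top.ne
  rw [integral_eq_lintegral_pos_part_sub_lintegral_neg_part hh, EReal.coe_sub,
    EReal.coe_ennreal_toReal hh.lintegral_lt_top.ne, EReal.coe_ennreal_toReal hneg]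
  exact EReal.sub_le_sub
    (EReal.coe_ennreal_le_coe_ennreal_iff.2 <|
      lintegral_mono fun ω => ENNReal.ofReal_le_ofReal (hgh ω))
    (EReal.coe_ennreal_le_coe_ennreal_iff.2 <|
      lintegral_mono fun ω => ENNReal.ofReal_le_ofReal (neg_le_neg (hgh ω)))

theorem tendsto_integral_max_neg_one {ι : Type*} {l : Filter ι} [l.IsCountablyGenerated]
    [IsFiniteMeasure μ] {F : ι → Ω → ℝ} {B : Ω → ℝ} {S : Set Ω} (hS : MeasurableSet S)
    (hFm : ∀ᶠ i in l, AEStronglyMeasurable (F i) μ) (hB : Integrable B μ)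
    (hFB : ∀ᶠ i in l, ∀ ω, F i ω ≤ B ω) (hFS : ∀ ω ∈ S, Tendsto (F · ω) l atBot)
    (hFSc : ∀ ω ∉ S, ∀ i, F i ω = 0) :
    Tendsto (fun i => ∫ ω, max (F i ω) (-1) ∂μ) l (𝓝 (-μ.real S)) := by
  have hlim : ∀ ω, Tendsto (fun i => max (F i ω) (-1)) l (𝓝 (S.indicator (fun _ => -1) ω)) := by
    intro ω
    by_cases hω : ω ∈ S
    · rw [indicator_of_mem hω]
      refine tendsto_const_nhds.congr' ?_
      filter_upwards [(hFS ω hω).eventually_le_atBot (-1)] with i hi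
      exact (max_eq_right hi).symm
    · simp [indicator_of_notMem hω, hFSc ω hω, tendsto_const_nhds]
  have hdom := tendsto_integral_filter_of_dominated_convergence
    (F := fun i ω => max (F i ω) (-1)) (fun ω => |B ω| + 1)
    (hFm.mono fun i hi => hi.sup aestronglyMeasurable_const)
    (hFB.mono fun i hi => ae_of_all _ fun ω => by
      rw [Real.norm_eq_abs, abs_le]
      constructor
      · linarith [le_max_right (F i ω) (-1), abs_nonneg (B ω)]
      · exact max_le (by linarith [hi ω, le_abs_self (B ω)]) (by linarith [abs_nonneg (B ω)]))
    (hB.abs.add (integrable_const 1)) (ae_of_all _ hlim)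
  rwa [integral_indicator_const _ hS, smul_eq_mul, mul_neg_one] at hdom

theorem lintegral_ofReal_sub_lintegral_ofReal_neg_lt_of_integral_max_slope_neg
    [IsProbabilityMeasure μ] {G : Ω → ℝ → ℝ} {c α : ℝ} (hα : 0 < α) (hG0 : ∀ ω, G ω 0 = c)
    (hneg : ∫ ω, max (slope (G ω) 0 α) (-1) ∂μ < 0) :
    (∫⁻ ω, ENNReal.ofReal (G ω α) ∂μ).toEReal - (∫⁻ ω, ENNReal.ofReal (-G ω α) ∂μ).toEReal
      < (c : EReal) := by
  -- a nonzero Bochner integral forces integrability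
  have hint : Integrable (fun ω => max (slope (G ω) 0 α) (-1)) μ :=
    .of_integral_ne_zero hneg.ne
  have hmajor : ∀ ω, G ω α ≤ c + α * max (slope (G ω) 0 α) (-1) := fun ω => by
    have hG := sub_smul_slope (G ω) 0 α
    rw [sub_zero, smul_eq_mul, vsub_eq_sub, hG0] at hG
    linarith [mul_le_mul_of_nonneg_left (le_max_left (slope (G ω) 0 α) (-1)) hα.le]
  calc _ ≤ ((∫ ω, c + α * max (slope (G ω) 0 α) (-1) ∂μ : ℝ) : EReal) :=
        lintegral_ofReal_sub_lintegral_ofReal_neg_le_integral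
          ((integrable_const c).add (hint.const_mul α)) hmajor
    _ < c := by
        rw [EReal.coe_lt_coe_iff, integral_add (integrable_const c) (hint.const_mul α),
          integral_const_mul]
        simp only [integral_const, probReal_univ, one_smul, add_lt_iff_neg_left]
        exact mul_neg_of_pos_of_neg hα hneg

theorem measurable_slope_comp_mul_sub_mul {f : ℝ → ℝ} (hf : ContinuousOn f (Ioi 0))
    {η Ψ : Ω → ℝ} (hη : Measurable η) (hη0 : ∀ ω, 0 ≤ η ω) (hΨ : Measurable Ψ) {α : ℝ}
    (hα : 0 ≤ α) :
    Measurable fun ω => slope (fun a => f (a * η ω) - a * η ω * Ψ ω) 0 α := by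
  have hfη : Measurable fun ω => f (α * η ω) :=
    hf.measurable_comp_of_nonneg (measurable_const.mul hη) fun ω => mul_nonneg hα (hη0 ω)
  simp only [slope_def_field, zero_mul, sub_zero]
  exact ((hfη.sub ((measurable_const.mul hη).mul hΨ)).sub measurable_const).div_const α

end Integral

theorem stmt_19_general {Ω : Type*} [MeasurableSpace Ω]
    (Vr : ℝ → ℝ)
    (hVconv : ConvexOn ℝ (Set.Ici 0) Vr)
    (hV'0 : Tendsto (fun y => derivWithin Vr (Set.Ioi 0) y) (𝓝[>] 0) atBot)
    (P : Measure Ω) [IsProbabilityMeasure P]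
    (η : Ω → ℝ) (hηmeas : Measurable η) (hηpos : ∀ ω, 0 ≤ η ω)
    (hηne : 0 < P {ω | 0 < η ω})
    (Ψ : Ω → ℝ) (hΨmeas : Measurable Ψ)
    (hG1 : Integrable (fun ω => Vr (η ω) - η ω * Ψ ω) P) :
    ∃ α ∈ Set.Ioc (0 : ℝ) 1,
      (∫⁻ ω, ENNReal.ofReal (Vr (α * η ω) - α * η ω * Ψ ω) ∂P).toEReal
        - (∫⁻ ω, ENNReal.ofReal (-(Vr (α * η ω) - α * η ω * Ψ ω)) ∂P).toEReal
        < ((Vr 0 : ℝ) : EReal) := by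
  set G : Ω → ℝ → ℝ := fun ω α => Vr (α * η ω) - α * η ω * Ψ ω with hG
  have hVcont : ContinuousOn Vr (Ioi 0) := by simpa using hVconv.continuousOn_interior
  have hB : Integrable (fun ω => slope (G ω) 0 1) P :=
    (hG1.sub (integrable_const (Vr 0))).congr (ae_of_all _ fun ω => by simp [slope_def_field, hG])
  have hslope_le : ∀ α ∈ Ioc (0 : ℝ) 1, ∀ ω, slope (G ω) 0 α ≤ slope (G ω) 0 1 := fun α hα ω =>
    (hVconv.comp_mul_sub_mul (hηpos ω) (Ψ ω)).slope_mono self_mem_Ici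
      ⟨mem_Ici.2 hα.1.le, hα.1.ne'⟩ ⟨mem_Ici.2 zero_le_one, one_ne_zero⟩ hα.2
  have hlim := tendsto_integral_max_neg_one (l := 𝓝[>] 0)
    (measurableSet_lt measurable_const hηmeas)
    (eventually_nhdsWithin_of_forall fun α hα =>
      (measurable_slope_comp_mul_sub_mul hVcont hηmeas hηpos hΨmeas
        (le_of_lt hα)).aestronglyMeasurable)
    hB (mem_of_superset (Ioc_mem_nhdsGT zero_lt_one) hslope_le)
    (fun ω hω => hVconv.tendsto_slope_comp_mul_sub_mul_atBot hV'0 hω (Ψ ω))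
    (fun ω hω α => by simp [le_antisymm (not_lt.1 hω) (hηpos ω), slope_def_field])
  have hneg : -P.real {ω | 0 < η ω} < 0 :=
    neg_neg_iff_pos.2 (ENNReal.toReal_pos hηne.ne' (measure_ne_top P _))
  obtain ⟨α, hint, hα⟩ :=
    ((hlim.eventually (gt_mem_nhds hneg)).and (Ioc_mem_nhdsGT zero_lt_one)).exists
  exact ⟨α, hα, lintegral_ofReal_sub_lintegral_ofReal_neg_lt_of_integral_max_slope_neg hα.1
    (fun ω => by simp) hint⟩

theorem stmt_19 {Ω : Type*} [MeasurableSpace Ω]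
    (Vr : ℝ → ℝ)
    (hVconv : ConvexOn ℝ (Set.Ici 0) Vr)
    (hVdiff : DifferentiableOn ℝ Vr (Set.Ioi 0))
    (hV'0 : Tendsto (fun y => derivWithin Vr (Set.Ioi 0) y) (𝓝[>] 0) atBot)
    (P : Measure Ω) [IsProbabilityMeasure P]
    (η : Ω → ℝ) (hηmeas : Measurable η) (hηpos : ∀ ω, 0 ≤ η ω)
    (hηne : 0 < P {ω | 0 < η ω})
    (Ψ : Ω → ℝ) (hΨmeas : Measurable Ψ)
    (hG1 : Integrable (fun ω => Vr (η ω) - η ω * Ψ ω) P) :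
    ∃ α ∈ Set.Ioc (0 : ℝ) 1,
      (∫⁻ ω, ENNReal.ofReal (Vr (α * η ω) - α * η ω * Ψ ω) ∂P).toEReal
        - (∫⁻ ω, ENNReal.ofReal (-(Vr (α * η ω) - α * η ω * Ψ ω)) ∂P).toEReal
        < ((Vr 0 : ℝ) : EReal) :=
  stmt_19_general Vr hVconv hV'0 P η hηmeas hηpos hηne Ψ hΨmeas hG1
end
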